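/- If κ is extendible and λ > κ is a Σ₂-correct cardinal, then for any elementary embedding j : V_{λ+1} → V_{λ'+1} with critical point κ and j(κ) > λ, the set j[λ] = {j(α) : α < λ} has order type λ, and λ is Σ₂-correct in V_{j(κ)}; hence j[λ] ∈ T_{j(κ), j(λ)}. -/

import Mathlib

open FirstOrder


/-- The ZFC universe, pinned to the lowest universe level. -/
abbrev ZS : Type 1 := ZFSet.{0}
/-! # Shared framework: the ZFC universe `ZS`, its rank hierarchy, first-order
satisfaction, Lévy-style Σ₂-correctness, normal fine ultrafilters on `P_κ(λ)`,
extendible cardinals, and abstract interfaces for forcing extensions. -/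

/-- The first-order language of set theory: a single binary relation `∈`. -/
def LST : FirstOrder.Language :=
  { Functions := fun _ => Empty
    Relations := fun n => match n with | 2 => PUnit | _ => Empty }

/-- Interpret a binary relation as an `LST`-structure. -/
def memStructure {M : Type*} (r : M → M → Prop) : LST.Structure M where
  funMap := fun {_} f _ => f.elim
  RelMap := fun {n} R v =>
    match n, R, v with
    | 0, R, _ => R.elim
    | 1, R, _ => R.elim
    | 2, _, v => r (v 0) (v 1)
    | (_+3), R, _ => R.elim

/-- The rank-initial segment `V_o` of the ZFC universe, as a class of `ZS`s. -/
def Vseg (o : Ordinal.{0}) : Set ZS := {x | ZFSet.rank x < o}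

noncomputable instance VsegStructure (o : Ordinal.{0}) : LST.Structure (Vseg o) :=
  memStructure (fun x y => x.1 ∈ y.1)

noncomputable instance zfStructure : LST.Structure ZS := memStructure (· ∈ ·)

noncomputable instance classStructure (M : Set ZS) : LST.Structure M :=
  memStructure (fun x y => x.1 ∈ y.1)

/-- Satisfaction of a formula with one parameter in `V_o`. -/
def SatIn (o : Ordinal.{0}) (φ : LST.Formula (Fin 1)) (a : ZS) : Prop :=
  ∃ h : ZFSet.rank a < o, φ.Realize (fun _ => (⟨a, h⟩ : Vseg o))

/-- Satisfaction of a formula with two parameters in `V_o`. -/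
def SatIn2 (o : Ordinal.{0}) (φ : LST.Formula (Fin 2)) (a b : ZS) : Prop :=
  ∃ (ha : ZFSet.rank a < o) (hb : ZFSet.rank b < o),
    φ.Realize (![(⟨a, ha⟩ : Vseg o), ⟨b, hb⟩])

/-- `μ` is a Σ₂-correct ordinal, via the Lévy characterization: Σ₂ facts about a
parameter are exactly those of the form "there is an ordinal `β` with `V_β ⊨ ψ(a)`". -/
def Sigma2Correct (μ : Ordinal.{0}) : Prop :=
  ∀ (φ : LST.Formula (Fin 1)) (a : ZS), ZFSet.rank a < μ →
    ((∃ β, SatIn β φ a) ↔ (∃ β < μ, SatIn β φ a))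

/-- `μ` is Σ₂-correct in `V_κ`. -/
def Sigma2CorrectIn (μ κ : Ordinal.{0}) : Prop :=
  μ < κ ∧ ∀ (φ : LST.Formula (Fin 1)) (a : ZS), ZFSet.rank a < μ →
    ((∃ β < κ, SatIn β φ a) ↔ (∃ β < μ, SatIn β φ a))

/-- `x` is the von Neumann ordinal corresponding to the (Lean) ordinal `o`. -/
def OrdZ (o : Ordinal.{0}) (x : ZS) : Prop := x.IsOrdinal ∧ ZFSet.rank x = o

/-- `α` is a von Neumann ordinal below `o`. -/
def ZOrd (o : Ordinal.{0}) (α : ZS) : Prop := α.IsOrdinal ∧ ZFSet.rank α < o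

/-- `σ` is a member of `P_κ(λ)`: a set of ordinals below `lam` of cardinality `< κ`. -/
def memPkl (κ : Cardinal.{0}) (lam : Ordinal.{0}) (σ : ZS) : Prop :=
  (∀ x ∈ σ, ZOrd lam x) ∧ Cardinal.mk σ.toSet < Cardinal.lift.{1} κ

/-- The order type of a set `σ` of von Neumann ordinals (as an `Ordinal.{1}`). -/
noncomputable def otype (σ : ZS) : Ordinal.{1} :=
  Ordinal.type (Subrel ((· < ·) : Ordinal.{0} → Ordinal.{0} → Prop) (· ∈ ZFSet.rank '' σ.toSet))

/-- `σ` has order type `μ`. -/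
def HasOtype (σ : ZS) (μ : Ordinal.{0}) : Prop := Ordinal.lift.{1} μ = otype σ

/-- `σ ∈ T_{κ,λ}`: `σ ∈ P_κ(λ)` and the order type of `σ` is Σ₂-correct in `V_κ`. -/
def memT (κ : Cardinal.{0}) (lam : Ordinal.{0}) (σ : ZS) : Prop :=
  memPkl κ lam σ ∧ ∃ μ : Ordinal.{0}, HasOtype σ μ ∧ Sigma2CorrectIn μ κ.ord

/-- `σ` lies in the analogue of `T_{κ,λ}` for an abstract correctness predicate `IC`
(used for `T_{κ,λ}*`, where `IC` is "indestructibly Σ₂-correct in `V_κ`"). -/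
def memTP (κ : Cardinal.{0}) (IC : Ordinal.{0} → Prop) (lam : Ordinal.{0}) (σ : ZS) : Prop :=
  memPkl κ lam σ ∧ ∃ μ : Ordinal.{0}, HasOtype σ μ ∧ IC μ

/-- `U` (a class of subsets of the `ZS` `T`) is a normal fine `κ`-complete
ultrafilter on `T ⊆ P_κ(λ)`. -/
structure IsNFUltra (κ : Cardinal.{0}) (lam : Ordinal.{0}) (T : ZS) (U : Set ZS) : Prop where
  mem_sub : ∀ A ∈ U, A ⊆ T
  top : T ∈ U
  bot : (∅ : ZS) ∉ U
  upward : ∀ A ∈ U, ∀ B : ZS, B ⊆ T → A ⊆ B → B ∈ U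
  ultra : ∀ A : ZS, A ⊆ T → A ∉ U →
    ∀ B : ZS, (∀ x, x ∈ B ↔ x ∈ T ∧ x ∉ A) → B ∈ U
  complete : ∀ s : Set ZS, s ⊆ U → s.Nonempty → Cardinal.mk s < Cardinal.lift.{1} κ →
    ∀ A : ZS, (∀ x, x ∈ A ↔ x ∈ T ∧ ∀ B ∈ s, x ∈ B) → A ∈ U
  fine : ∀ α : ZS, ZOrd lam α →
    ∀ A : ZS, (∀ x, x ∈ A ↔ x ∈ T ∧ α ∈ x) → A ∈ U
  normal : ∀ f : ZS → ZS, (∀ α : ZS, ZOrd lam α → f α ∈ U) →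
    ∀ A : ZS, (∀ x, x ∈ A ↔ x ∈ T ∧ ∀ α ∈ x, x ∈ f α) → A ∈ U

/-- `M` is a transitive class containing all ordinals (an inner-model carrier). -/
def IsInner (M : Set ZS) : Prop :=
  (∀ x ∈ M, ∀ y : ZS, y ∈ x → y ∈ M) ∧ ∀ x : ZS, x.IsOrdinal → x ∈ M

/-- `j` is an elementary embedding of the universe `V` into the class `M`. -/
structure ElemEmbInto (M : Set ZS) (j : ZS → ZS) : Prop where
  maps : ∀ x, j x ∈ M
  elem : ∀ (n : ℕ) (φ : LST.Formula (Fin n)) (v : Fin n → ZS),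
    φ.Realize v ↔ φ.Realize (fun i => (⟨j (v i), maps (v i)⟩ : M))

/-- `j` is an elementary embedding from the class `W` into the class `M`. -/
structure ElemEmbBetween (W M : Set ZS) (j : ZS → ZS) : Prop where
  maps : ∀ x ∈ W, j x ∈ M
  elem : ∀ (n : ℕ) (φ : LST.Formula (Fin n)) (v : Fin n → W),
    φ.Realize v ↔ φ.Realize (fun i => (⟨j (v i).1, maps _ (v i).2⟩ : M))

/-- The class `M` is closed under `λ`-sequences: any (external) `λ`-indexed sequence of
elements of `M`, coded as a set of ordered pairs, belongs to `M`. -/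
def ClosedUnderSeq (M : Set ZS) (lam : Ordinal.{0}) : Prop :=
  ∀ f : ZS → ZS, (∀ α : ZS, ZOrd lam α → f α ∈ M) →
    ∀ g : ZS, (∀ p, p ∈ g ↔ ∃ α : ZS, ZOrd lam α ∧ p = α.pair (f α)) → g ∈ M

/-- `(M, j)` is (an isomorphic copy of) the ultrapower of the universe by the
ultrafilter `U` on `T ⊆ P_κ(λ)`: `j` is elementary into `M`, the seed `j[λ]`
belongs to `M` and generates `M` (every element of `M` is `j(f)(j[λ])` for an
internal function `f` on `T`), and `U` is the ultrafilter derived from `j` and `j[λ]`. -/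
structure IsUltrapowerOf (κ : Cardinal.{0}) (lam : Ordinal.{0}) (T U : ZS)
    (M : Set ZS) (j : ZS → ZS) : Prop where
  elem : ElemEmbInto M j
  seed : ∀ s : ZS, (∀ x, x ∈ s ↔ ∃ α : ZS, ZOrd lam α ∧ x = j α) →
    s ∈ M ∧ (∀ A : ZS, A ∈ U ↔ A ⊆ T ∧ s ∈ j A) ∧
    ∀ y ∈ M, ∃ f : ZS,
      (∀ p ∈ f, ∃ σ ∈ T, ∃ z : ZS, p = σ.pair z) ∧
      (∀ σ ∈ T, ∃ z : ZS, σ.pair z ∈ f) ∧ s.pair y ∈ j f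

/-- `κ` is extendible: for every `λ ≥ κ` there are `λ' > λ` and an elementary
`j : V_{λ+1} → V_{λ'+1}` fixing everything of rank below `κ` and sending (the von
Neumann ordinal) `κ` above `λ`. -/
def Extendible (κ : Ordinal.{0}) : Prop :=
  ∀ lam ≥ κ, ∃ lam' > lam, ∃ j : Vseg (lam+1) ↪ₑ[LST] Vseg (lam'+1),
    (∀ x : Vseg (lam+1), ZFSet.rank x.1 < κ → (j x).1 = x.1) ∧
    (∀ x : Vseg (lam+1), OrdZ κ x.1 → lam < ZFSet.rank (j x).1)

/-- `κ` is `γ`-extendible. -/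
def GammaExtendible (κ γ : Ordinal.{0}) : Prop :=
  ∃ γ' : Ordinal.{0}, ∃ j : Vseg (γ+1) ↪ₑ[LST] Vseg (γ'+1),
    (∀ x : Vseg (γ+1), ZFSet.rank x.1 < κ → (j x).1 = x.1) ∧
    (∀ x : Vseg (γ+1), OrdZ κ x.1 → γ < ZFSet.rank (j x).1)

/-- The `o`-th rank initial segment of a class `M`. -/
def VsegIn (M : Set ZS) (o : Ordinal.{0}) : Set ZS := {x | x ∈ M ∧ ZFSet.rank x < o}

/-- Satisfaction with one parameter in `(V_o)^N` for a class `N`. -/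
def SatInClass (N : Set ZS) (o : Ordinal.{0}) (φ : LST.Formula (Fin 1)) (a : ZS) : Prop :=
  ∃ h : a ∈ VsegIn N o, φ.Realize (fun _ => (⟨a, h⟩ : VsegIn N o))

/-- `lam` is Σ₂-correct in the class `N` (Lévy characterization relativized to `N`). -/
def Sigma2CorrectInClass (N : Set ZS) (lam : Ordinal.{0}) : Prop :=
  ∀ (φ : LST.Formula (Fin 1)) (a : ZS), a ∈ N → ZFSet.rank a < lam →
    ((∃ β, SatInClass N β φ a) ↔ (∃ β < lam, SatInClass N β φ a))

/-- `κ` is extendible over the inner model `W`: the extendibility embeddings can be chosen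
with `j ↾ V_λ^W ∈ W` and `j(V_λ^W) = V_{λ'}^W`. -/
def ExtendibleOver (W : Set ZS) (κ : Ordinal.{0}) : Prop :=
  ∀ lam ≥ κ, ∃ lam' > lam, ∃ j : Vseg (lam+1) ↪ₑ[LST] Vseg (lam'+1),
    (∀ x : Vseg (lam+1), ZFSet.rank x.1 < κ → (j x).1 = x.1) ∧
    (∀ x : Vseg (lam+1), OrdZ κ x.1 → lam < ZFSet.rank (j x).1) ∧
    (∀ r : ZS, (∀ p, p ∈ r ↔ ∃ x : Vseg (lam+1), x.1 ∈ W ∧ ZFSet.rank x.1 < lam ∧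
        p = x.1.pair (j x).1) → r ∈ W) ∧
    (∀ v : Vseg (lam+1), (∀ z, z ∈ v.1 ↔ z ∈ W ∧ ZFSet.rank z < lam) →
      ∀ z, z ∈ (j v).1 ↔ z ∈ W ∧ ZFSet.rank z < lam')

/-- `lam` is a Beth fixed point. -/
def BethFixed (lam : Ordinal.{0}) : Prop := (Cardinal.beth lam).ord = lam

/-- `p` is the powerset of `a` as computed in the class `M`. -/
def IsPowersetIn (M : Set ZS) (a p : ZS) : Prop :=
  p ∈ M ∧ ∀ x, x ∈ p ↔ x ∈ M ∧ x ⊆ a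

/-- `f` is (the graph of) a bijection from `a` onto `b`. -/
def IsBijOn (f a b : ZS) : Prop :=
  (∀ p ∈ f, ∃ x ∈ a, ∃ y ∈ b, p = x.pair y) ∧
  (∀ x ∈ a, ∃! y : ZS, x.pair y ∈ f) ∧
  (∀ y ∈ b, ∃! x : ZS, x.pair y ∈ f)

/-- `f` is (the graph of) an injection of `a` into `b`. -/
def IsInjOn (f a b : ZS) : Prop :=
  (∀ p ∈ f, ∃ x ∈ a, ∃ y ∈ b, p = x.pair y) ∧
  (∀ x ∈ a, ∃! y : ZS, x.pair y ∈ f) ∧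
  (∀ x x' y : ZS, x.pair y ∈ f → x'.pair y ∈ f → x = x')

/-- `θ` is the ordinal `(2^|a|)` as computed in `M`: the least `M`-ordinal in `M`-bijection
with the `M`-powerset of `a`. -/
def IsContinuumOfIn (M : Set ZS) (a θ : ZS) : Prop :=
  θ ∈ M ∧ θ.IsOrdinal ∧
  (∃ p f : ZS, IsPowersetIn M a p ∧ f ∈ M ∧ IsBijOn f p θ) ∧
  ∀ θ' : ZS, θ' ∈ M → θ'.IsOrdinal →
    (∃ p f : ZS, IsPowersetIn M a p ∧ f ∈ M ∧ IsBijOn f p θ') →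
    ZFSet.rank θ ≤ ZFSet.rank θ'

/-- `u` is (internally) an ultrafilter on the set `S`. -/
def IsUltraOn (S u : ZS) : Prop :=
  (∀ A ∈ u, A ⊆ S) ∧ S ∈ u ∧ (∅ : ZS) ∉ u ∧
  (∀ A ∈ u, ∀ B : ZS, B ⊆ S → A ⊆ B → B ∈ u) ∧
  (∀ A B : ZS, A ∈ u → B ∈ u → ∀ C : ZS, (∀ x, x ∈ C ↔ x ∈ A ∧ x ∈ B) → C ∈ u) ∧
  (∀ A : ZS, A ⊆ S → A ∉ u → ∀ B : ZS, (∀ x, x ∈ B ↔ x ∈ S ∧ x ∉ A) → B ∈ u)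


/-!
Since `j` preserves membership, it is strictly increasing on the ordinals below `λ`, so `j[λ]` has
order type `λ`; and a Σ₂-correct `λ` is a limit ordinal which stays Σ₂-correct in every `V_δ`,
`δ > λ`. The substance is `|j(κ)| > λ`. The critical point `κ` is a cardinal, so `V_{λ+1}`
satisfies "`κ` is a cardinal" and by elementarity `V_{λ'+1}` satisfies "`j(κ)` is a cardinal".
As `j(λ)` is a limit ordinal above `j(κ)`, an injection of `j(κ)` into `λ` would already lie in
`V_{j(λ)} ⊆ V_{λ'+1}`, which is impossible since `λ ∈ j(κ)`.
-/

open Order ZFSet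

theorem mem_Vseg {o : Ordinal.{0}} {x : ZS} : x ∈ Vseg o ↔ x.rank < o := Iff.rfl

theorem Vseg.mem_of_mem {o : Ordinal.{0}} {x y : ZS} (hx : x ∈ Vseg o) (hy : y ∈ x) :
    y ∈ Vseg o :=
  (rank_lt_of_mem hy).trans hx

theorem toZFSet_mem_Vseg {o α : Ordinal.{0}} : α.toZFSet ∈ Vseg o ↔ α < o := by
  rw [mem_Vseg, Ordinal.rank_toZFSet]

noncomputable def Vseg.ord {o α : Ordinal.{0}} (h : α < o) : Vseg o :=
  ⟨α.toZFSet, toZFSet_mem_Vseg.2 h⟩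

theorem OrdZ.eq_toZFSet {o : Ordinal.{0}} {x : ZS} (h : OrdZ o x) : x = o.toZFSet :=
  h.2 ▸ h.1.toZFSet_rank_eq.symm

theorem zOrd_iff {o : Ordinal.{0}} {x : ZS} : ZOrd o x ↔ ∃ α < o, α.toZFSet = x :=
  ⟨fun h => ⟨x.rank, h.2, h.1.toZFSet_rank_eq⟩,
    fun ⟨α, hα, hx⟩ => hx ▸ ⟨isOrdinal_toZFSet α, by rwa [Ordinal.rank_toZFSet]⟩⟩

theorem ZFSet.IsOrdinal.card_eq_card_rank {x : ZS} (hx : x.IsOrdinal) : x.card = x.rank.card := by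
  conv_lhs => rw [← hx.toZFSet_rank_eq]
  exact Ordinal.card_toZFSet _

theorem isSuccLimit_iff_toZFSet (ρ : Ordinal.{0}) :
    IsSuccLimit ρ ↔ (∃ y, y ∈ ρ.toZFSet) ∧ ∀ y ∈ ρ.toZFSet, ∃ z ∈ ρ.toZFSet, y ∈ z := by
  simp only [Ordinal.isSuccLimit_iff, isSuccPrelimit_iff_succ_lt, Ordinal.mem_toZFSet_iff,
    forall_exists_index, and_imp, exists_exists_and_eq_and]
  refine and_congr ⟨fun h => ⟨_, 0, pos_iff_ne_zero.2 h, rfl⟩, ?_⟩ ?_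
  · rintro ⟨_, β, hβ, -⟩
    exact (pos_of_gt hβ).ne'
  · refine ⟨fun h _ β hβ hy => ⟨_, h β hβ, β, lt_succ β, hy⟩, fun h β hβ => ?_⟩
    obtain ⟨γ, hγ, δ, hδ, hδβ⟩ := h _ β hβ rfl
    rw [Ordinal.toZFSet_injective hδβ] at hδ
    exact (succ_le_of_lt hδ).trans_lt hγ

theorem hasOtype_of_strictMono {μ : Ordinal.{0}} {s : ZS} {g : Set.Iio μ → ZS}
    (hg : StrictMono fun α => (g α).rank) (hs : s.toSet = Set.range g) : HasOtype s μ := by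
  have hr : rank '' s.toSet = Set.range fun α => (g α).rank := by
    rw [hs, ← Set.range_comp]; rfl
  rw [HasOtype, otype, ← Ordinal.type_lt_Iio]
  exact Ordinal.type_eq.2
    ⟨(hg.orderIso _).toRelIsoLT.trans ⟨Equiv.setCongr hr.symm, Iff.rfl⟩⟩

theorem rank_pair_eq_succ_succ (x y : ZS) :
    (x.pair y).rank = succ (succ (max x.rank y.rank)) := by
  rw [ZFSet.pair, rank_pair, rank_singleton, rank_pair, ← Order.succ_max x.rank y.rank]
  exact max_eq_right (succ_le_succ (succ_le_succ (le_max_left x.rank y.rank)))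

def WitnessesCardLe (f k b : ZS) : Prop :=
  (∀ x ∈ b, ∀ y ∈ k, ∀ y' ∈ k, x.pair y ∈ f → x.pair y' ∈ f → y = y') ∧
  ∀ y ∈ k, ∃ x ∈ b, x.pair y ∈ f

theorem WitnessesCardLe.card_le {f k b : ZS} (h : WitnessesCardLe f k b) :
    k.card ≤ b.card := by
  choose F hFb hFf using fun y : k => h.2 y.1 y.2
  have hinj : Function.Injective fun y : k => (⟨F y, hFb y⟩ : b) := fun y y' hyy' => by
    have hF : F y = F y' := congrArg Subtype.val hyy'
    exact Subtype.ext (h.1 _ (hFb y) _ y.2 _ y'.2 (hFf y) (hF ▸ hFf y'))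
  have := Cardinal.mk_le_of_injective hinj
  rwa [cardinalMk_coe_sort, cardinalMk_coe_sort, Cardinal.lift_le] at this

theorem exists_witnessesCardLe {o : Ordinal.{0}} (ho : IsSuccLimit o) {k b : ZS}
    (hk : k ∈ Vseg o) (hb : b ∈ Vseg o) (h : k.card ≤ b.card) :
    ∃ f ∈ Vseg o, WitnessesCardLe f k b := by
  rw [← Cardinal.lift_le, ← cardinalMk_coe_sort, ← cardinalMk_coe_sort] at h
  obtain ⟨ι⟩ := h
  refine ⟨range fun y : k => (ι y).1.pair y.1, ?_, ?_, fun y hy => ⟨_, (ι ⟨y, hy⟩).2, ?_⟩⟩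
  · have hm : max b.rank k.rank < o := max_lt hb hk
    refine lt_of_le_of_lt ?_ (ho.succ_lt (ho.succ_lt hm))
    refine rank_le_iff.2 fun p hp => ?_
    obtain ⟨y, rfl⟩ := mem_range.1 hp
    rw [rank_pair_eq_succ_succ]
    exact succ_lt_succ (succ_lt_succ (max_lt_max (rank_lt_of_mem (ι y).2) (rank_lt_of_mem y.2)))
  · intro x _ y hy y' hy' hp hp'
    obtain ⟨z, hz⟩ := mem_range.1 hp
    obtain ⟨z', hz'⟩ := mem_range.1 hp'
    obtain ⟨h1, rfl⟩ := pair_inj.1 hz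
    obtain ⟨h1', rfl⟩ := pair_inj.1 hz'
    exact congrArg Subtype.val (ι.injective (Subtype.ext (h1.trans h1'.symm)))
  · exact mem_range_self (⟨y, hy⟩ : k)

def IsCardinalIn (o : Ordinal.{0}) (k : ZS) : Prop :=
  ∀ b ∈ k, ∀ f ∈ Vseg o, ¬ WitnessesCardLe f k b

theorem isCardinalIn_toZFSet {κ : Ordinal.{0}} (h : κ.card.ord = κ) (o : Ordinal.{0}) :
    IsCardinalIn o κ.toZFSet := by
  intro b hb f _ hf
  obtain ⟨β, hβ, rfl⟩ := Ordinal.mem_toZFSet_iff.1 hb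
  have hcard : κ.card ≤ β.card := by simpa using hf.card_le
  exact hβ.not_ge (h ▸ (Cardinal.ord_le_ord.2 hcard).trans (Cardinal.ord_card_le β))

theorem IsCardinalIn.card_lt {o γ β ρ : Ordinal.{0}} (h : IsCardinalIn o ρ.toZFSet)
    (hγ : IsSuccLimit γ) (hγo : γ ≤ o) (hρ : ρ < γ) (hβ : β < ρ) : β.card < ρ.card := by
  by_contra! hle
  obtain ⟨f, hf, hwit⟩ := exists_witnessesCardLe hγ (toZFSet_mem_Vseg.2 hρ)
    (toZFSet_mem_Vseg.2 (hβ.trans hρ)) (by simpa using hle)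
  exact h _ (Ordinal.toZFSet_mem_toZFSet_iff.2 hβ) f (hf.trans_le hγo) hwit

noncomputable section Formulas

open FirstOrder.Language

variable {α : Type} {o : Ordinal.{0}}

def memFml (X Y : α) : LST.Formula α :=
  (show LST.Relations 2 from PUnit.unit).formula₂ (Term.var X) (Term.var Y)

def eqFml (X Y : α) : LST.Formula α :=
  Term.equal (Term.var X) (Term.var Y)

/-- Bound variables are addressed de Bruijn style: the innermost one is `Sum.inr ()`, and each
`Sum.inl` steps out past one quantifier. -/
def allFml (φ : LST.Formula (α ⊕ Unit)) : LST.Formula α :=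
  Formula.iAlls Unit φ

def exFml (φ : LST.Formula (α ⊕ Unit)) : LST.Formula α :=
  Formula.iExs Unit φ

def ballFml (X : α) (φ : LST.Formula (α ⊕ Unit)) : LST.Formula α :=
  allFml (memFml (Sum.inr ()) (Sum.inl X) ⟹ φ)

def bexFml (X : α) (φ : LST.Formula (α ⊕ Unit)) : LST.Formula α :=
  exFml (memFml (Sum.inr ()) (Sum.inl X) ⊓ φ)

@[simp] theorem realize_memFml (X Y : α) (v : α → Vseg o) :
    (memFml X Y).Realize v ↔ (v X).1 ∈ (v Y).1 :=
  Formula.realize_rel₂.trans Iff.rfl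

@[simp] theorem realize_eqFml (X Y : α) (v : α → Vseg o) :
    (eqFml X Y).Realize v ↔ (v X).1 = (v Y).1 := by
  rw [eqFml, Formula.realize_equal, Subtype.ext_iff]
  rfl

@[simp] theorem realize_allFml (φ : LST.Formula (α ⊕ Unit)) (v : α → Vseg o) :
    (allFml φ).Realize v ↔ ∀ y : Vseg o, φ.Realize (Sum.elim v fun _ => y) :=
  Formula.realize_iAlls.trans ⟨fun h _ => h _, fun h i => h (i ())⟩

@[simp] theorem realize_exFml (φ : LST.Formula (α ⊕ Unit)) (v : α → Vseg o) :
    (exFml φ).Realize v ↔ ∃ y : Vseg o, φ.Realize (Sum.elim v fun _ => y) :=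
  Formula.realize_iExs.trans ⟨fun ⟨i, h⟩ => ⟨i (), h⟩, fun ⟨_, h⟩ => ⟨_, h⟩⟩

@[simp] theorem realize_ballFml (X : α) (φ : LST.Formula (α ⊕ Unit)) (v : α → Vseg o) :
    (ballFml X φ).Realize v ↔ ∀ y (hy : y ∈ (v X).1),
      φ.Realize (Sum.elim v fun _ => ⟨y, Vseg.mem_of_mem (v X).2 hy⟩) := by
  simp only [ballFml, realize_allFml, Formula.realize_imp, realize_memFml, Sum.elim_inl,
    Sum.elim_inr]
  exact ⟨fun h y hy => h _ hy, fun h y => h y.1⟩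

@[simp] theorem realize_bexFml (X : α) (φ : LST.Formula (α ⊕ Unit)) (v : α → Vseg o) :
    (bexFml X φ).Realize v ↔ ∃ y, ∃ hy : y ∈ (v X).1,
      φ.Realize (Sum.elim v fun _ => ⟨y, Vseg.mem_of_mem (v X).2 hy⟩) := by
  simp only [bexFml, realize_exFml, Formula.realize_inf, realize_memFml, Sum.elim_inl,
    Sum.elim_inr]
  exact ⟨fun ⟨y, hy, h⟩ => ⟨y.1, hy, h⟩, fun ⟨_, hy, h⟩ => ⟨_, hy, h⟩⟩

def isSingletonFml (Q X : α) : LST.Formula α :=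
  allFml ((memFml (Sum.inr ()) (Sum.inl Q)).iff (eqFml (Sum.inr ()) (Sum.inl X)))

def isDoubletonFml (Q X Y : α) : LST.Formula α :=
  allFml ((memFml (Sum.inr ()) (Sum.inl Q)).iff
    (eqFml (Sum.inr ()) (Sum.inl X) ⊔ eqFml (Sum.inr ()) (Sum.inl Y)))

theorem realize_isSingletonFml (Q X : α) (v : α → Vseg o) :
    (isSingletonFml Q X).Realize v ↔ (v Q).1 = {(v X).1} := by
  simp only [isSingletonFml, realize_allFml, Formula.realize_iff, realize_memFml, realize_eqFml,
    Sum.elim_inl, Sum.elim_inr]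
  refine ⟨fun h => ZFSet.ext fun z => ?_, fun h y => by rw [h, ZFSet.mem_singleton]⟩
  rw [ZFSet.mem_singleton]
  exact ⟨fun hz => (h ⟨z, Vseg.mem_of_mem (v Q).2 hz⟩).1 hz, fun hz => (h ⟨z, hz ▸ (v X).2⟩).2 hz⟩

theorem realize_isDoubletonFml (Q X Y : α) (v : α → Vseg o) :
    (isDoubletonFml Q X Y).Realize v ↔ (v Q).1 = {(v X).1, (v Y).1} := by
  simp only [isDoubletonFml, realize_allFml, Formula.realize_iff, Formula.realize_sup,
    realize_memFml, realize_eqFml, Sum.elim_inl, Sum.elim_inr]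
  refine ⟨fun h => ZFSet.ext fun z => ?_, fun h y => by rw [h, ZFSet.mem_pair]⟩
  rw [ZFSet.mem_pair]
  refine ⟨fun hz => (h ⟨z, Vseg.mem_of_mem (v Q).2 hz⟩).1 hz, fun hz => ?_⟩
  rcases hz with rfl | rfl
  exacts [(h (v X)).2 (Or.inl rfl), (h (v Y)).2 (Or.inr rfl)]

/-- Stated with bounded quantifiers so that it defines Kuratowski pairs in every `V_o`, not only
for `o` closed under pairing. -/
def isPairFml (P X Y : α) : LST.Formula α :=
  ballFml P (isSingletonFml (Sum.inr ()) (Sum.inl X) ⊔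
      isDoubletonFml (Sum.inr ()) (Sum.inl X) (Sum.inl Y)) ⊓
    bexFml P (isSingletonFml (Sum.inr ()) (Sum.inl X)) ⊓
    bexFml P (isDoubletonFml (Sum.inr ()) (Sum.inl X) (Sum.inl Y))

theorem realize_isPairFml (P X Y : α) (v : α → Vseg o) :
    (isPairFml P X Y).Realize v ↔ (v P).1 = (v X).1.pair (v Y).1 := by
  simp only [isPairFml, Formula.realize_inf, Formula.realize_sup, realize_ballFml,
    realize_bexFml, realize_isSingletonFml, realize_isDoubletonFml, Sum.elim_inl, Sum.elim_inr,
    exists_prop, exists_eq_right]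
  refine ⟨fun ⟨⟨h, h1⟩, h2⟩ => ZFSet.ext fun q => ?_, fun h => ?_⟩
  · rw [ZFSet.pair, ZFSet.mem_pair]
    refine ⟨h q, ?_⟩
    rintro (rfl | rfl)
    exacts [h1, h2]
  · simp [h, ZFSet.pair]

def pairMemFml (F X Y : α) : LST.Formula α :=
  bexFml F (isPairFml (Sum.inr ()) (Sum.inl X) (Sum.inl Y))

theorem realize_pairMemFml (F X Y : α) (v : α → Vseg o) :
    (pairMemFml F X Y).Realize v ↔ (v X).1.pair (v Y).1 ∈ (v F).1 := by
  simp only [pairMemFml, realize_bexFml, realize_isPairFml, Sum.elim_inl, Sum.elim_inr,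
    exists_prop, exists_eq_right]

def witnessesCardLeFml : LST.Formula (Fin 3) :=
  ballFml 2 (ballFml (Sum.inl 1) (ballFml (Sum.inl (Sum.inl 1))
      (pairMemFml (Sum.inl (Sum.inl (Sum.inl 0))) (Sum.inl (Sum.inl (Sum.inr ())))
          (Sum.inl (Sum.inr ())) ⟹
        pairMemFml (Sum.inl (Sum.inl (Sum.inl 0))) (Sum.inl (Sum.inl (Sum.inr ())))
          (Sum.inr ()) ⟹
        eqFml (Sum.inl (Sum.inr ())) (Sum.inr ())))) ⊓
    ballFml 1 (bexFml (Sum.inl 2) (pairMemFml (Sum.inl (Sum.inl 0)) (Sum.inr ())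
      (Sum.inl (Sum.inr ()))))

theorem realize_witnessesCardLeFml (v : Fin 3 → Vseg o) :
    witnessesCardLeFml.Realize v ↔ WitnessesCardLe (v 0).1 (v 1).1 (v 2).1 := by
  simp only [witnessesCardLeFml, WitnessesCardLe, Formula.realize_inf, Formula.realize_imp,
    realize_ballFml, realize_bexFml, realize_pairMemFml, realize_eqFml, Sum.elim_inl,
    Sum.elim_inr, exists_prop]

def isCardinalFml : LST.Formula (Fin 1) :=
  ballFml 0 (allFml (witnessesCardLeFml.relabel
    ![Sum.inr (), Sum.inl (Sum.inl 0), Sum.inl (Sum.inr ())]).not)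

theorem realize_isCardinalFml (k : Vseg o) :
    isCardinalFml.Realize (fun _ => k) ↔ IsCardinalIn o k.1 := by
  simp only [isCardinalFml, realize_ballFml, realize_allFml, Formula.realize_not,
    Formula.realize_relabel, realize_witnessesCardLeFml]
  exact ⟨fun h b hb f hf => h b hb ⟨f, hf⟩, fun h b hb f => h b hb f.1 f.2⟩

def isOrdinalFml : LST.Formula (Fin 1) :=
  ballFml 0 (ballFml (Sum.inr ()) (memFml (Sum.inr ()) (Sum.inl (Sum.inl 0)))) ⊓
    ballFml 0 (ballFml (Sum.inr ()) (ballFml (Sum.inr ())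
      (memFml (Sum.inr ()) (Sum.inl (Sum.inl (Sum.inr ()))))))

theorem realize_isOrdinalFml (x : Vseg o) :
    isOrdinalFml.Realize (fun _ => x) ↔ x.1.IsOrdinal := by
  simp only [isOrdinalFml, Formula.realize_inf, realize_ballFml, realize_memFml, Sum.elim_inl,
    Sum.elim_inr]
  exact ⟨fun ⟨h₁, h₂⟩ => ⟨fun y hy z hz => h₁ y hy z hz, fun hyz hzw hwx => h₂ _ hwx _ hzw _ hyz⟩,
    fun h => ⟨fun y hy z hz => h.mem_trans hz hy, fun w hw z hz y hy => h.mem_trans' hy hz hw⟩⟩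

def isLimitFml : LST.Formula (Fin 1) :=
  bexFml 0 ⊤ ⊓ ballFml 0 (bexFml (Sum.inl 0) (memFml (Sum.inl (Sum.inr ())) (Sum.inr ())))

theorem realize_isLimitFml (x : Vseg o) :
    isLimitFml.Realize (fun _ => x) ↔ (∃ y, y ∈ x.1) ∧ ∀ y ∈ x.1, ∃ z ∈ x.1, y ∈ z := by
  simp [isLimitFml]

def memSomeFml : LST.Formula (Fin 1) :=
  exFml (memFml (Sum.inl 0) (Sum.inr ()))

theorem realize_memSomeFml (x : Vseg o) :
    memSomeFml.Realize (fun _ => x) ↔ ∃ y ∈ Vseg o, x.1 ∈ y := by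
  simp [memSomeFml]

end Formulas

theorem Sigma2Correct.sigma2CorrectIn {μ X : Ordinal.{0}} (h : Sigma2Correct μ) (hX : μ < X) :
    Sigma2CorrectIn μ X :=
  ⟨hX, fun φ a ha => ⟨fun ⟨β, _, hβ⟩ => (h φ a ha).1 ⟨β, hβ⟩,
    fun ⟨β, hβ, hsat⟩ => ⟨β, hβ.trans hX, hsat⟩⟩⟩

/-- Reflecting the Σ₂ fact "`β` belongs to some set" below `μ` yields `β + 1 < μ`. -/
theorem Sigma2Correct.isSuccLimit {μ : Ordinal.{0}} (h : Sigma2Correct μ) (hμ : μ ≠ 0) :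
    IsSuccLimit μ := by
  refine Ordinal.isSuccLimit_iff.2 ⟨hμ, isSuccPrelimit_iff_succ_lt.2 fun β hβ => ?_⟩
  have hsat : SatIn (succ (succ β)) memSomeFml β.toZFSet := by
    refine ⟨by simp,
      (realize_memSomeFml _).2 ⟨{β.toZFSet}, ?_, mem_singleton.2 rfl⟩⟩
    rw [mem_Vseg, rank_singleton, Ordinal.rank_toZFSet]
    exact lt_succ _
  obtain ⟨γ, hγ, _, hreal⟩ :=
    (h memSomeFml β.toZFSet (by rwa [Ordinal.rank_toZFSet])).1 ⟨_, hsat⟩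
  obtain ⟨y, hy, hβy⟩ := (realize_memSomeFml _).1 hreal
  have : β < y.rank := by simpa using rank_lt_of_mem hβy
  exact (succ_le_of_lt this).trans_lt (hy.trans hγ)

section ElementaryEmbedding

variable {o₁ o₂ : Ordinal.{0}} (j : Vseg o₁ ↪ₑ[LST] Vseg o₂)

theorem map_mem_map {a b : Vseg o₁} (h : a.1 ∈ b.1) : (j a).1 ∈ (j b).1 := by
  have := (j.map_formula (memFml (0 : Fin 2) 1) ![a, b]).2
  simp only [realize_memFml] at this
  exact this h

theorem isOrdinal_map {a : Vseg o₁} (h : a.1.IsOrdinal) : (j a).1.IsOrdinal :=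
  (realize_isOrdinalFml (j a)).1 ((j.map_formula isOrdinalFml fun _ => a).2
    ((realize_isOrdinalFml a).2 h))

theorem isSuccLimit_rank_map {a : Vseg o₁} (ha : a.1.IsOrdinal) (h : IsSuccLimit a.1.rank) :
    IsSuccLimit (j a).1.rank := by
  have hja := (isOrdinal_map j ha).toZFSet_rank_eq
  rw [isSuccLimit_iff_toZFSet, hja]
  rw [isSuccLimit_iff_toZFSet, ha.toZFSet_rank_eq, ← realize_isLimitFml] at h
  exact (realize_isLimitFml (j a)).1 ((j.map_formula isLimitFml fun _ => a).2 h)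

theorem witnessesCardLe_map {f k b : Vseg o₁} (h : WitnessesCardLe f.1 k.1 b.1) :
    WitnessesCardLe (j f).1 (j k).1 (j b).1 :=
  (realize_witnessesCardLeFml (j ∘ ![f, k, b])).1 ((j.map_formula witnessesCardLeFml _).2
    ((realize_witnessesCardLeFml ![f, k, b]).2 h))

theorem isCardinalIn_map {k : Vseg o₁} (h : IsCardinalIn o₁ k.1) : IsCardinalIn o₂ (j k).1 :=
  (realize_isCardinalFml (j k)).1 ((j.map_formula isCardinalFml fun _ => k).2
    ((realize_isCardinalFml k).2 h))

theorem zOrd_rank_map {a b : Vseg o₁} (hb : b.1.IsOrdinal) (ha : ZOrd b.1.rank a.1) :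
    ZOrd (j b).1.rank (j a).1 :=
  ⟨isOrdinal_map j ha.1, rank_lt_of_mem (map_mem_map j ((ha.1.rank_lt_iff_mem hb).1 ha.2))⟩

theorem strictMono_rank_map_ord {μ : Ordinal.{0}} (hμ : μ ≤ o₁) :
    StrictMono fun α : Set.Iio μ => (j (Vseg.ord (α.2.trans_le hμ))).1.rank :=
  fun _ _ h => rank_lt_of_mem (map_mem_map j (Ordinal.toZFSet_mem_toZFSet_iff.2 h))

theorem toSet_eq_range_map_ord {μ : Ordinal.{0}} (hμ : μ ≤ o₁) {s : ZS}
    (hs : ∀ x, x ∈ s ↔ ∃ a : Vseg o₁, ZOrd μ a.1 ∧ x = (j a).1) :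
    s.toSet = Set.range fun α : Set.Iio μ => (j (Vseg.ord (α.2.trans_le hμ))).1 := by
  ext x
  refine (hs x).trans ⟨?_, ?_⟩
  · rintro ⟨a, ha, rfl⟩
    obtain ⟨α, hα, hαa⟩ := zOrd_iff.1 ha
    exact ⟨⟨α, hα⟩, congrArg (fun a => (j a).1) (Subtype.ext hαa)⟩
  · rintro ⟨α, rfl⟩
    exact ⟨_, zOrd_iff.2 ⟨α.1, α.2, rfl⟩, rfl⟩

end ElementaryEmbedding

section CriticalPoint

variable {lam : Cardinal.{0}} {κ o : Ordinal.{0}} (j : Vseg (lam.ord + 1) ↪ₑ[LST] Vseg o)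

/-- Were `κ` not a cardinal, `j` would carry an injection of `κ` into the fixed ordinal `|κ| < κ`
to one of `j(κ)` into `|κ|`; but `|κ| < λ < j(κ)`. -/
theorem ord_card_eq_of_critical (hlim : IsSuccLimit lam.ord) (hκ : κ < lam.ord)
    (hfix : ∀ x : Vseg (lam.ord + 1), x.1.rank < κ → (j x).1 = x.1)
    (hmove : ∀ x : Vseg (lam.ord + 1), OrdZ κ x.1 → lam.ord < (j x).1.rank) :
    κ.card.ord = κ := by
  by_contra hne
  have hμκ : κ.card.ord < κ := (Cardinal.ord_card_le κ).lt_of_ne hne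
  obtain ⟨f, hf, hwit⟩ := exists_witnessesCardLe hlim (toZFSet_mem_Vseg.2 hκ)
    (toZFSet_mem_Vseg.2 (hμκ.trans hκ)) (by simp)
  let κZ : Vseg (lam.ord + 1) := Vseg.ord (hκ.trans (lt_add_one _))
  let μZ : Vseg (lam.ord + 1) := Vseg.ord (hμκ.trans (hκ.trans (lt_add_one _)))
  let fV : Vseg (lam.ord + 1) := ⟨f, mem_Vseg.2 ((mem_Vseg.1 hf).trans (lt_add_one _))⟩
  have hwit' := witnessesCardLe_map j (f := fV) (k := κZ) (b := μZ) hwit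
  rw [hfix μZ (by simpa [μZ, Vseg.ord] using hμκ)] at hwit'
  have hjκ := hmove κZ ⟨isOrdinal_toZFSet κ, Ordinal.rank_toZFSet κ⟩
  have hle : lam ≤ (j κZ).1.card := by
    rw [(isOrdinal_map j (isOrdinal_toZFSet κ)).card_eq_card_rank]
    simpa using Ordinal.card_le_card hjκ.le
  have hlt : (μZ.1).card < lam := by
    simpa [μZ, Vseg.ord] using Cardinal.lt_ord.1 hκ
  exact (hwit'.card_le.trans_lt hlt).not_ge hle

end CriticalPoint

theorem stmt_4_general (κ : Ordinal.{0}) (lam : Cardinal.{0}) (lam' : Ordinal.{0})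
    (hκlam : κ < lam.ord) (hcor : Sigma2Correct lam.ord)
    (j : Vseg (lam.ord+1) ↪ₑ[LST] Vseg (lam'+1))
    (hfix : ∀ x : Vseg (lam.ord+1), ZFSet.rank x.1 < κ → (j x).1 = x.1)
    (hmove : ∀ x : Vseg (lam.ord+1), OrdZ κ x.1 → lam.ord < ZFSet.rank (j x).1)
    (s : ZS)
    (hs : ∀ x : ZS, x ∈ s ↔ ∃ a : Vseg (lam.ord+1), ZOrd lam.ord a.1 ∧ x = (j a).1) :
    HasOtype s lam.ord ∧
    ∀ kZ : Vseg (lam.ord+1), OrdZ κ kZ.1 →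
      Sigma2CorrectIn lam.ord (ZFSet.rank (j kZ).1) ∧
      ∀ lamZ : Vseg (lam.ord+1), OrdZ lam.ord lamZ.1 →
        memT (ZFSet.rank (j kZ).1).card (ZFSet.rank (j lamZ).1) s := by
  have hlim : IsSuccLimit lam.ord := hcor.isSuccLimit (ne_bot_of_gt hκlam)
  have hrange := toSet_eq_range_map_ord j (lt_add_one lam.ord).le hs
  have hmono := strictMono_rank_map_ord j (lt_add_one lam.ord).le
  have hotype : HasOtype s lam.ord := hasOtype_of_strictMono hmono hrange
  refine ⟨hotype, fun kZ hk => ?_⟩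
  set ρ := (j kZ).1.rank
  have hκZ : kZ.1 = κ.toZFSet := hk.eq_toZFSet
  have hρ : (j kZ).1 = ρ.toZFSet :=
    (isOrdinal_map j (hκZ ▸ isOrdinal_toZFSet κ)).toZFSet_rank_eq.symm
  let lamV : Vseg (lam.ord + 1) := Vseg.ord (lt_add_one _)
  have hρlt : ρ < (j lamV).1.rank :=
    rank_lt_of_mem (map_mem_map j (hκZ ▸ Ordinal.toZFSet_mem_toZFSet_iff.2 hκlam))
  have hlim' : IsSuccLimit (j lamV).1.rank :=
    isSuccLimit_rank_map j (isOrdinal_toZFSet _) (by simpa [lamV, Vseg.ord] using hlim)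
  have hcard : IsCardinalIn (lam' + 1) ρ.toZFSet := hρ ▸ isCardinalIn_map j
    (hκZ ▸ isCardinalIn_toZFSet (ord_card_eq_of_critical j hlim hκlam hfix hmove) _)
  have hlamρ : lam < ρ.card := by
    simpa using hcard.card_lt hlim' (j lamV).2.le hρlt (hmove kZ hk)
  refine ⟨hcor.sigma2CorrectIn (hmove kZ hk), fun lamZ hlamZ =>
    ⟨⟨fun x hx => ?_, ?_⟩, lam.ord, hotype, hcor.sigma2CorrectIn (Cardinal.ord_lt_ord.2 hlamρ)⟩⟩
  · obtain ⟨a, ha, rfl⟩ := (hs x).1 hx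
    exact zOrd_rank_map j hlamZ.1 (by rwa [hlamZ.2])
  · rw [hrange, Cardinal.mk_range_eq _ (Function.Injective.of_comp (f := rank) hmono.injective),
      Cardinal.mk_Iio_ordinal, Cardinal.card_ord]
    exact Cardinal.lift_lt.2 hlamρ

/-- if `κ` is extendible, `λ > κ` is a Σ₂-correct cardinal, and
`j : V_{λ+1} → V_{λ'+1}` is elementary with critical point `κ` and `j(κ) > λ`, then
`j[λ]` has order type `λ`, `λ` is Σ₂-correct in `V_{j(κ)}`, and hence
`j[λ] ∈ T_{j(κ), j(λ)}`. -/
theorem stmt_4 (κ : Ordinal.{0}) (lam : Cardinal.{0}) (lam' : Ordinal.{0})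
    (hext : Extendible κ) (hκlam : κ < lam.ord) (hcor : Sigma2Correct lam.ord)
    (j : Vseg (lam.ord+1) ↪ₑ[LST] Vseg (lam'+1))
    (hfix : ∀ x : Vseg (lam.ord+1), ZFSet.rank x.1 < κ → (j x).1 = x.1)
    (hmove : ∀ x : Vseg (lam.ord+1), OrdZ κ x.1 → lam.ord < ZFSet.rank (j x).1)
    (s : ZS)
    (hs : ∀ x : ZS, x ∈ s ↔ ∃ a : Vseg (lam.ord+1), ZOrd lam.ord a.1 ∧ x = (j a).1) :
    HasOtype s lam.ord ∧
    ∀ kZ : Vseg (lam.ord+1), OrdZ κ kZ.1 →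
      Sigma2CorrectIn lam.ord (ZFSet.rank (j kZ).1) ∧
      ∀ lamZ : Vseg (lam.ord+1), OrdZ lam.ord lamZ.1 →
        memT (ZFSet.rank (j kZ).1).card (ZFSet.rank (j lamZ).1) s :=
  stmt_4_general κ lam lam' hκlam hcor j hfix hmove s hs
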